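/- arXiv:2102.08031 — 2 statements merged into one kernel-verified Lean document; each statement's English description precedes it below -/
import Mathlib

section
/- Let n ∈ ℕ, let μ be a positive Borel measure on ℝ^n satisfying the growth condition, and let g : (ℂ∖ℝ)^n → ℂ be the Cauchy-type function given by μ. Then for every index j ∈ {1,…,n}, every angle θ ∈ (0, π/2], and every fixed choice of the components z_k ∈ ℂ∖ℝ for k ≠ j, one has g(z)/z_j → 0 as |z_j| → ∞ within the upper Stoltz domain of angle θ, and also g(z)/z_j → 0 as |z_j| → ∞ within the lower Stoltz domain of angle θ. -/
open Complex MeasureTheory Finset Filter Topology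

/-- The kernel `K_n`. -/
noncomputable def kernelK (n : ℕ) (z : Fin n → ℂ) (t : Fin n → ℝ) : ℂ :=
  Complex.I * ((2 / (2 * Complex.I) ^ n) *
      ∏ ℓ : Fin n, (((t ℓ : ℂ) - z ℓ)⁻¹ - ((t ℓ : ℂ) + Complex.I)⁻¹) -
    (1 / (2 * Complex.I) ^ n) *
      ∏ ℓ : Fin n, (((t ℓ : ℂ) - Complex.I)⁻¹ - ((t ℓ : ℂ) + Complex.I)⁻¹))

/-- The selective conjugation map `Ψ_B`. -/
noncomputable def PsiMap (n : ℕ) (B : Finset (Fin n)) (z w : Fin n → ℂ) : Fin n → ℂ :=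
  fun j => if j ∈ B then (starRingEnd ℂ) (w j) else z j

/-- The poly cut-plane `(ℂ∖ℝ)^n`. -/
def polyCutPlane (n : ℕ) : Set (Fin n → ℂ) := {z | ∀ j, (z j).im ≠ 0}

/-- The poly upper half-plane `ℂ^{+n}`. -/
def upperPoly (n : ℕ) : Set (Fin n → ℂ) := {z | ∀ j, 0 < (z j).im}

/-- The growth condition for a positive Borel measure on `ℝ^n`. -/
def GrowthCondition (n : ℕ) (μ : Measure (Fin n → ℝ)) : Prop :=
  ∫⁻ t, ENNReal.ofReal (∏ ℓ : Fin n, (1 + (t ℓ) ^ 2)⁻¹) ∂μ < ⊤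

/-- The factors `N_{-1}, N_0, N_1`. -/
noncomputable def Nfun (ρ : ℤ) (z : ℂ) (t : ℝ) : ℂ :=
  if ρ = -1 then (1 / (2 * Complex.I)) * (((t : ℂ) - z)⁻¹ - ((t : ℂ) - Complex.I)⁻¹)
  else if ρ = 0 then
    (1 / (2 * Complex.I)) * (((t : ℂ) - Complex.I)⁻¹ - ((t : ℂ) + Complex.I)⁻¹)
  else (1 / (2 * Complex.I)) * (((t : ℂ) + Complex.I)⁻¹ - ((t : ℂ) - (starRingEnd ℂ) z)⁻¹)

/-- The Nevanlinna condition for a positive Borel measure on `ℝ^n`: the sum runs over all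
`ρ ∈ {-1,0,1}^n` containing both `-1` and `1` (encoded via `Fin 3`, `k ↦ k - 1`). -/
def NevanlinnaCondition (n : ℕ) (μ : Measure (Fin n → ℝ)) : Prop :=
  ∀ z : Fin n → ℂ, (∀ j, 0 < (z j).im) →
    ∑ ρ ∈ Finset.univ.filter
        (fun ρ : Fin n → Fin 3 => (∃ j, ρ j = 0) ∧ (∃ j, ρ j = 2)),
      ∫ t, ∏ j : Fin n, Nfun ((ρ j : ℤ) - 1) (z j) (t j) ∂μ = 0

/-- The symmetry formula for a function on the poly cut-plane. -/
def SymmetryFormula (n : ℕ) (f : (Fin n → ℂ) → ℂ) : Prop :=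
  ∀ z ∈ polyCutPlane n,
    f z = ∑ B ∈ Finset.univ.powerset.filter (fun B : Finset (Fin n) => B ≠ ∅),
      (-1 : ℂ) ^ (B.card + 1) *
        (starRingEnd ℂ) (f (PsiMap n B (fun _ => Complex.I) z))

/-- The variable non-dependence property. -/
def VarNonDep (n : ℕ) (f : (Fin n → ℂ) → ℂ) : Prop :=
  ∀ z ∈ polyCutPlane n, ∀ w ∈ polyCutPlane n,
    (∃ j, (z j).im < 0) → (∀ j, (z j).im < 0 ↔ (w j).im < 0) →
    (∀ j, (z j).im < 0 → z j = w j) → f z = f w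

/-- The upper Stoltz domain with centre `0` and angle `θ`. -/
def upperStoltz (θ : ℝ) : Set ℂ :=
  {w | 0 < w.im ∧ θ ≤ Complex.arg w ∧ Complex.arg w ≤ Real.pi - θ}

/-- The lower Stoltz domain with centre `0` and angle `θ`. -/
def lowerStoltz (θ : ℝ) : Set ℂ :=
  {w | (starRingEnd ℂ) w ∈ upperStoltz θ}

/-- The filter of `|w| → ∞` within a set `S ⊆ ℂ`. -/
noncomputable def stoltzFilter (S : Set ℂ) : Filter ℂ :=
  (Filter.comap (fun w : ℂ => ‖w‖) Filter.atTop) ⊓ Filter.principal S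

/-!
Write `K_n(z, t) = i (2i)⁻ⁿ (2 ∏ f(z_ℓ, t_ℓ) - ∏ f(i, t_ℓ))` with `f(ζ, t) = (t - ζ)⁻¹ - (t + i)⁻¹`.
Since `t + i = (t - ζ) + (ζ + i)` and `|Im ζ| ≤ |t - ζ|`, one has `|f(ζ, t)| ≤ κ(ζ) (1 + t²)⁻¹`
with `κ(ζ) = (1 + |ζ + i| / |Im ζ|) |ζ + i|`, and in a Stoltz domain `|Im w| ≥ sin θ |w|`
gives `κ(w) = O(|w|)`. So `K_n(z, t) / z_j` is dominated by a multiple of `∏ (1 + t_ℓ²)⁻¹`,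
which is `μ`-integrable by the growth condition, while it tends to `0` pointwise because
`K_n(z, t)` converges as `z_j → ∞`. Dominated convergence concludes.
-/

noncomputable def cauchyFactor (ζ : ℂ) (t : ℝ) : ℂ := ((t : ℂ) - ζ)⁻¹ - ((t : ℂ) + I)⁻¹

noncomputable def cauchyFactorConst (ζ : ℂ) : ℝ := (1 + ‖ζ + I‖ / |ζ.im|) * ‖ζ + I‖

lemma kernelK_eq (n : ℕ) (z : Fin n → ℂ) (t : Fin n → ℝ) :
    kernelK n z t = I / (2 * I) ^ n *
      (2 * ∏ ℓ, cauchyFactor (z ℓ) (t ℓ) - ∏ ℓ, cauchyFactor I (t ℓ)) := by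
  unfold kernelK cauchyFactor
  ring

lemma cauchyFactorConst_nonneg (ζ : ℂ) : 0 ≤ cauchyFactorConst ζ := by
  unfold cauchyFactorConst
  positivity

lemma norm_ofReal_add_I_sq (t : ℝ) : ‖(t : ℂ) + I‖ ^ 2 = 1 + t ^ 2 := by
  rw [Complex.sq_norm, Complex.normSq_apply]
  simp only [add_re, ofReal_re, I_re, add_zero, add_im, ofReal_im, I_im, zero_add]
  ring

lemma norm_ofReal_add_I_le {ζ : ℂ} (hζ : ζ.im ≠ 0) (t : ℝ) :
    ‖(t : ℂ) + I‖ ≤ (1 + ‖ζ + I‖ / |ζ.im|) * ‖(t : ℂ) - ζ‖ := by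
  have him : |ζ.im| ≤ ‖(t : ℂ) - ζ‖ := by
    simpa using Complex.abs_im_le_norm ((t : ℂ) - ζ)
  calc ‖(t : ℂ) + I‖ = ‖((t : ℂ) - ζ) + (ζ + I)‖ := by ring_nf
    _ ≤ ‖(t : ℂ) - ζ‖ + ‖ζ + I‖ := norm_add_le _ _
    _ = ‖(t : ℂ) - ζ‖ + ‖ζ + I‖ / |ζ.im| * |ζ.im| := by
      rw [div_mul_cancel₀ _ (abs_ne_zero.mpr hζ)]
    _ ≤ ‖(t : ℂ) - ζ‖ + ‖ζ + I‖ / |ζ.im| * ‖(t : ℂ) - ζ‖ := by gcongr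
    _ = _ := by ring

lemma norm_cauchyFactor_le {ζ : ℂ} (hζ : ζ.im ≠ 0) (t : ℝ) :
    ‖cauchyFactor ζ t‖ ≤ cauchyFactorConst ζ * (1 + t ^ 2)⁻¹ := by
  have hsub : (t : ℂ) - ζ ≠ 0 := fun h => hζ (by simpa using congrArg Complex.im h)
  have hadd : (t : ℂ) + I ≠ 0 := fun h => by simpa using congrArg Complex.im h
  have hformula : cauchyFactor ζ t = (ζ + I) / (((t : ℂ) - ζ) * ((t : ℂ) + I)) := by
    unfold cauchyFactor
    field_simp
    ring
  rw [hformula, norm_div, norm_mul, ← norm_ofReal_add_I_sq, cauchyFactorConst]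
  rw [div_le_iff₀ (by positivity)]
  calc ‖ζ + I‖ = ‖ζ + I‖ * ‖(t : ℂ) + I‖ / ‖(t : ℂ) + I‖ := by field_simp
    _ ≤ ‖ζ + I‖ * ((1 + ‖ζ + I‖ / |ζ.im|) * ‖(t : ℂ) - ζ‖) / ‖(t : ℂ) + I‖ := by
      gcongr; exact norm_ofReal_add_I_le hζ t
    _ = _ := by field_simp

lemma norm_kernelK_le {n : ℕ} {ζ : Fin n → ℂ} (hζ : ∀ ℓ, (ζ ℓ).im ≠ 0) (t : Fin n → ℝ) :
    ‖kernelK n ζ t‖ ≤ (2 * ∏ ℓ, cauchyFactorConst (ζ ℓ) + cauchyFactorConst I ^ n) / 2 ^ n *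
      ∏ ℓ, (1 + t ℓ ^ 2)⁻¹ := by
  have hprod : ∀ ξ : Fin n → ℂ, (∀ ℓ, (ξ ℓ).im ≠ 0) →
      ‖∏ ℓ, cauchyFactor (ξ ℓ) (t ℓ)‖ ≤
        (∏ ℓ, cauchyFactorConst (ξ ℓ)) * ∏ ℓ, (1 + t ℓ ^ 2)⁻¹ := fun ξ hξ => by
    rw [norm_prod, ← Finset.prod_mul_distrib]
    exact Finset.prod_le_prod (fun _ _ => norm_nonneg _)
      fun ℓ _ => norm_cauchyFactor_le (hξ ℓ) (t ℓ)
  have hI := hprod (fun _ => I) (fun _ => by simp)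
  rw [Finset.prod_const, Finset.card_univ, Fintype.card_fin] at hI
  rw [kernelK_eq, norm_mul, norm_div, norm_pow, norm_mul, Complex.norm_I, Complex.norm_two,
    mul_one, div_mul_eq_mul_div, one_mul, div_mul_eq_mul_div, add_mul, mul_assoc]
  gcongr
  calc ‖2 * ∏ ℓ, cauchyFactor (ζ ℓ) (t ℓ) - ∏ ℓ, cauchyFactor I (t ℓ)‖
      ≤ 2 * ‖∏ ℓ, cauchyFactor (ζ ℓ) (t ℓ)‖ + ‖∏ ℓ, cauchyFactor I (t ℓ)‖ := by
        simpa using norm_sub_le (2 * ∏ ℓ, cauchyFactor (ζ ℓ) (t ℓ)) (∏ ℓ, cauchyFactor I (t ℓ))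
    _ ≤ _ := by gcongr; exact hprod ζ hζ

lemma cauchyFactorConst_le {s : ℝ} (hs : 0 < s) {w : ℂ} (hw : 1 ≤ ‖w‖)
    (hsw : s * ‖w‖ ≤ |w.im|) : cauchyFactorConst w ≤ 2 * (1 + 2 / s) * ‖w‖ := by
  have hnorm : ‖w + I‖ ≤ 2 * ‖w‖ := by
    calc ‖w + I‖ ≤ ‖w‖ + ‖I‖ := norm_add_le _ _
      _ ≤ 2 * ‖w‖ := by rw [Complex.norm_I]; linarith
  have hratio : ‖w + I‖ / |w.im| ≤ 2 / s := by
    rw [div_le_div_iff₀ (by nlinarith) hs]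
    nlinarith
  unfold cauchyFactorConst
  calc (1 + ‖w + I‖ / |w.im|) * ‖w + I‖ ≤ (1 + 2 / s) * (2 * ‖w‖) := by gcongr
    _ = _ := by ring

lemma tendsto_cauchyFactor_cobounded (t : ℝ) :
    Tendsto (fun w => cauchyFactor w t) (Bornology.cobounded ℂ) (𝓝 (-((t : ℂ) + I)⁻¹)) := by
  simpa [cauchyFactor] using
    (tendsto_inv₀_cobounded.comp (tendsto_const_sub_cobounded (t : ℂ))).sub_const ((t : ℂ) + I)⁻¹

lemma tendsto_kernelK_update_div_cobounded {n : ℕ} (z : Fin n → ℂ) (j : Fin n)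
    (t : Fin n → ℝ) :
    Tendsto (fun w => kernelK n (Function.update z j w) t / w) (Bornology.cobounded ℂ)
      (𝓝 0) := by
  have hfactor : ∀ ℓ, Tendsto (fun w => cauchyFactor (Function.update z j w ℓ) (t ℓ))
      (Bornology.cobounded ℂ)
      (𝓝 (Function.update (fun k => cauchyFactor (z k) (t k)) j (-((t j : ℂ) + I)⁻¹) ℓ)) := by
    intro ℓ
    rcases eq_or_ne ℓ j with rfl | hℓ
    · simpa using tendsto_cauchyFactor_cobounded (t ℓ)
    · simp only [Function.update_of_ne hℓ]
      exact tendsto_const_nhds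
  have hkernel := ((tendsto_finsetProd Finset.univ fun ℓ _ => hfactor ℓ).const_mul 2).sub_const
    (∏ ℓ, cauchyFactor I (t ℓ)) |>.const_mul (I / (2 * I) ^ n)
  simp_rw [div_eq_mul_inv, kernelK_eq]
  simpa using hkernel.mul (tendsto_inv₀_cobounded (α := ℂ))

lemma measurable_kernelK (n : ℕ) (ζ : Fin n → ℂ) : Measurable (kernelK n ζ) := by
  unfold kernelK
  fun_prop

lemma GrowthCondition.integrable {n : ℕ} {μ : Measure (Fin n → ℝ)} (hμ : GrowthCondition n μ) :
    Integrable (fun t : Fin n → ℝ => ∏ ℓ, (1 + t ℓ ^ 2)⁻¹) μ := by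
  refine ⟨(by fun_prop : Measurable _).aestronglyMeasurable, ?_⟩
  rwa [hasFiniteIntegral_iff_ofReal (ae_of_all μ fun t => by positivity)]

lemma im_ne_zero_of_mul_norm_le_abs_im {s : ℝ} (hs : 0 < s) {w : ℂ} (hw : 0 < ‖w‖)
    (h : s * ‖w‖ ≤ |w.im|) : w.im ≠ 0 :=
  abs_pos.mp ((mul_pos hs hw).trans_le h)

lemma update_mem_polyCutPlane {n : ℕ} {z : Fin n → ℂ} {j : Fin n}
    (hz : ∀ k, k ≠ j → (z k).im ≠ 0) {w : ℂ} (hw : w.im ≠ 0) :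
    Function.update z j w ∈ polyCutPlane n := by
  intro k
  rcases eq_or_ne k j with rfl | hk
  · simpa using hw
  · simpa [Function.update_of_ne hk] using hz k hk

lemma sin_mul_norm_le_im_of_mem_upperStoltz {θ : ℝ} (hθ : -(Real.pi / 2) ≤ θ) {w : ℂ}
    (hw : w ∈ upperStoltz θ) : Real.sin θ * ‖w‖ ≤ w.im := by
  obtain ⟨him, hθarg, hargθ⟩ := hw
  have hw0 : 0 < ‖w‖ := norm_pos_iff.mpr fun h => by simp [h] at him
  have hsin : Real.sin θ ≤ Real.sin (arg w) := by
    rcases le_or_gt (arg w) (Real.pi / 2) with harg | harg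
    · exact Real.sin_le_sin_of_le_of_le_pi_div_two hθ harg hθarg
    · rw [← Real.sin_pi_sub (arg w)]
      exact Real.sin_le_sin_of_le_of_le_pi_div_two hθ (by linarith) (by linarith)
  calc Real.sin θ * ‖w‖ ≤ Real.sin (arg w) * ‖w‖ := by gcongr
    _ = w.im := by rw [Complex.sin_arg, div_mul_cancel₀ _ hw0.ne']

lemma sin_mul_norm_le_neg_im_of_mem_lowerStoltz {θ : ℝ} (hθ : -(Real.pi / 2) ≤ θ) {w : ℂ}
    (hw : w ∈ lowerStoltz θ) : Real.sin θ * ‖w‖ ≤ -w.im := by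
  simpa using sin_mul_norm_le_im_of_mem_upperStoltz hθ hw

lemma stoltzFilter_le_cobounded (S : Set ℂ) : stoltzFilter S ≤ Bornology.cobounded ℂ := by
  rw [stoltzFilter, comap_norm_atTop]
  exact inf_le_left

instance (S : Set ℂ) : (stoltzFilter S).IsCountablyGenerated := by
  unfold stoltzFilter
  infer_instance

lemma tendsto_integral_kernelK_update_div {n : ℕ} {μ : Measure (Fin n → ℝ)}
    (hμ : GrowthCondition n μ) {z : Fin n → ℂ} {j : Fin n} (hz : ∀ k, k ≠ j → (z k).im ≠ 0)
    {l : Filter ℂ} [l.IsCountablyGenerated] (hl : l ≤ Bornology.cobounded ℂ) {s : ℝ}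
    (hs : 0 < s) (hsl : ∀ᶠ w in l, s * ‖w‖ ≤ |w.im|) :
    Tendsto (fun w => (∫ t, kernelK n (Function.update z j w) t ∂μ) / w) l (𝓝 0) := by
  set P := ∏ k ∈ Finset.univ \ {j}, cauchyFactorConst (z k)
  set C := (2 * (2 * (1 + 2 / s) * P) + cauchyFactorConst I ^ n) / 2 ^ n with hC
  have hP : 0 ≤ P := Finset.prod_nonneg fun k _ => cauchyFactorConst_nonneg (z k)
  have hbound : ∀ᶠ w in l, ∀ t, ‖kernelK n (Function.update z j w) t / w‖ ≤
      C * ∏ ℓ, (1 + t ℓ ^ 2)⁻¹ := by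
    filter_upwards [(tendsto_norm_cobounded_atTop.mono_left hl).eventually_ge_atTop 1, hsl]
      with w hw hsw t
    have hw0 : 0 < ‖w‖ := by linarith
    have hcut := update_mem_polyCutPlane hz (im_ne_zero_of_mul_norm_le_abs_im hs hw0 hsw)
    have hsplit : ∏ ℓ, cauchyFactorConst (Function.update z j w ℓ) = cauchyFactorConst w * P := by
      rw [← Function.comp_def, Function.comp_update, Finset.prod_update_of_mem (Finset.mem_univ j)]
      rfl
    have hI : 0 ≤ cauchyFactorConst I ^ n := pow_nonneg (cauchyFactorConst_nonneg I) n
    rw [norm_div, div_le_iff₀ hw0]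
    calc ‖kernelK n (Function.update z j w) t‖
        ≤ (2 * (cauchyFactorConst w * P) + cauchyFactorConst I ^ n) / 2 ^ n *
          ∏ ℓ, (1 + t ℓ ^ 2)⁻¹ := hsplit ▸ norm_kernelK_le hcut t
      _ ≤ (2 * (2 * (1 + 2 / s) * ‖w‖ * P) + cauchyFactorConst I ^ n * ‖w‖) / 2 ^ n *
          ∏ ℓ, (1 + t ℓ ^ 2)⁻¹ := by
        gcongr
        · exact cauchyFactorConst_le hs hw hsw
        · exact le_mul_of_one_le_right hI hw
      _ = C * (∏ ℓ, (1 + t ℓ ^ 2)⁻¹) * ‖w‖ := by rw [hC]; ring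
  simp_rw [← integral_div]
  simpa using tendsto_integral_filter_of_dominated_convergence _
    (Eventually.of_forall fun w => ((measurable_kernelK n _).div_const w).aestronglyMeasurable)
    (hbound.mono fun w hw => ae_of_all μ hw) (hμ.integrable.const_mul C)
    (ae_of_all μ fun t => (tendsto_kernelK_update_div_cobounded z j t).mono_left hl)

lemma tendsto_update_div_of_eq_integral_kernelK {n : ℕ} {μ : Measure (Fin n → ℝ)}
    (hμ : GrowthCondition n μ) {g : (Fin n → ℂ) → ℂ}
    (hg : ∀ z ∈ polyCutPlane n, g z = (1 / (Real.pi : ℂ) ^ n) * ∫ t, kernelK n z t ∂μ)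
    {z : Fin n → ℂ} {j : Fin n} (hz : ∀ k, k ≠ j → (z k).im ≠ 0)
    {l : Filter ℂ} [l.IsCountablyGenerated] (hl : l ≤ Bornology.cobounded ℂ) {s : ℝ}
    (hs : 0 < s) (hsl : ∀ᶠ w in l, s * ‖w‖ ≤ |w.im|) :
    Tendsto (fun w => g (Function.update z j w) / w) l (𝓝 0) := by
  have hlim := (tendsto_integral_kernelK_update_div hμ hz hl hs hsl).const_mul
    (1 / (Real.pi : ℂ) ^ n)
  rw [mul_zero] at hlim
  refine hlim.congr' ?_
  filter_upwards [hsl, (tendsto_norm_cobounded_atTop.mono_left hl).eventually_gt_atTop 0]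
    with w hsw hw
  rw [hg _ (update_mem_polyCutPlane hz (im_ne_zero_of_mul_norm_le_abs_im hs hw hsw)),
    mul_div_assoc]

/-- Lemma 2.2: a Cauchy-type function `g` satisfies `g(z)/z_j → 0` non-tangentially, in both
the upper and lower Stoltz domains, for each coordinate `j`. -/
theorem cauchy_type_stoltz_limit
    (n : ℕ) (μ : Measure (Fin n → ℝ)) (hμ : GrowthCondition n μ)
    (g : (Fin n → ℂ) → ℂ)
    (hg : ∀ z ∈ polyCutPlane n,
      g z = (1 / (Real.pi : ℂ) ^ n) * ∫ t, kernelK n z t ∂μ)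
    (j : Fin n) (θ : ℝ) (hθ1 : 0 < θ) (hθ2 : θ ≤ Real.pi / 2)
    (z : Fin n → ℂ) (hz : ∀ k, k ≠ j → (z k).im ≠ 0) :
    Filter.Tendsto (fun w : ℂ => g (Function.update z j w) / w)
      (stoltzFilter (upperStoltz θ)) (nhds 0) ∧
    Filter.Tendsto (fun w : ℂ => g (Function.update z j w) / w)
      (stoltzFilter (lowerStoltz θ)) (nhds 0) := by
  have hsin : 0 < Real.sin θ := Real.sin_pos_of_pos_of_lt_pi hθ1 (by linarith [Real.pi_pos])
  have hθ : -(Real.pi / 2) ≤ θ := by linarith [Real.pi_pos]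
  exact ⟨tendsto_update_div_of_eq_integral_kernelK hμ hg hz (stoltzFilter_le_cobounded _) hsin
      (mem_inf_of_right fun w hw =>
        (sin_mul_norm_le_im_of_mem_upperStoltz hθ hw).trans (le_abs_self _)),
    tendsto_update_div_of_eq_integral_kernelK hμ hg hz (stoltzFilter_le_cobounded _) hsin
      (mem_inf_of_right fun w hw =>
        (sin_mul_norm_le_neg_im_of_mem_lowerStoltz hθ hw).trans (neg_le_abs _))⟩
end

section
/- Let μ₂ be the positive Borel measure on ℝ² defined by μ₂(U) := π ∫_ℝ χ_U(t,t) dt for Borel sets U ⊆ ℝ² (i.e. μ₂ is the pushforward of π times Lebesgue measure on ℝ under t ↦ (t,t)). Then for all z₁, z₂ ∈ ℂ with Im z₁ < 0 and Im z₂ > 0, it holds that π^{−2} ∫_{ℝ²} K_2((z₁,z₂),t) dμ₂(t) = −i/2 + 1/(z₂−z₁) − 1/(i+z₂); and for all z₁, z₂ ∈ ℂ with Im z₁ < 0 and Im z₂ < 0, it holds that π^{−2} ∫_{ℝ²} K_2((z₁,z₂),t) dμ₂(t) = −i/2. In particular, the value on the component ℂ^− × ℂ^+ depends explicitly on both variables,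 so this Cauchy-type function does not satisfy the variable non-dependence property. -/
open Complex MeasureTheory Finset Filter Topology

/-- The measure `μ₂` on `ℝ²`: `π` times the pushforward of Lebesgue measure under `t ↦ (t,t)`,
i.e. `μ₂(U) = π ∫_ℝ χ_U(t,t) dt`. -/
noncomputable def muDiag : Measure (Fin 2 → ℝ) :=
  ENNReal.ofReal Real.pi •
    Measure.map (fun t : ℝ => (fun _ : Fin 2 => t)) volume

/-! On the diagonal `t ↦ (t, t)` the kernel `K₂((z₁, z₂), ·)` is a linear combination of products
`(t - a)⁻¹ (t - b)⁻¹` with `a, b ∈ {z₁, z₂, i, -i}`. For `a ≠ b` off the real axis such a product has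
the antiderivative `(a - b)⁻¹ (log (t - a) - log (t - b))`. As `t → +∞`, `log (t - a) - log |t| → 0`,
while as `t → -∞` it tends to `-π i sign (Im a)`, the branch of `log` being seen from the half-plane
that `t - a` stays in. Hence
`∫ (t - a)⁻¹ (t - b)⁻¹ dt = π i (sign Im a - sign Im b) / (a - b)`, which vanishes when `a` and `b`
lie in the same half-plane. Substituting gives the two closed forms, and the one on `ℂ⁻ × ℂ⁺`
visibly changes with `z₂`. -/

open scoped Real

lemma ofReal_sub_ne_zero {c : ℂ} (hc : c.im ≠ 0) (t : ℝ) : (t : ℂ) - c ≠ 0 := by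
  intro h
  exact hc (by simpa using congrArg im h)

lemma memLp_two_inv_ofReal_sub {c : ℂ} (hc : c.im ≠ 0) :
    MemLp (fun t : ℝ => ((t : ℂ) - c)⁻¹) 2 := by
  have hcont : Continuous fun t : ℝ => ((t : ℂ) - c)⁻¹ :=
    (continuous_ofReal.sub continuous_const).inv₀ (ofReal_sub_ne_zero hc)
  refine (memLp_two_iff_integrable_sq_norm hcont.aestronglyMeasurable).2 ?_
  have h := ((integrable_inv_one_add_sq.comp_div hc).comp_sub_right c.re).const_mul (c.im ^ 2)⁻¹
  refine h.congr (Eventually.of_forall fun t => ?_)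
  simp only [norm_inv, inv_pow, ← normSq_eq_norm_sq, normSq_apply, sub_re, ofReal_re, sub_im,
    ofReal_im]
  field_simp
  ring

lemma integrable_inv_ofReal_sub_mul_inv_ofReal_sub {a b : ℂ} (ha : a.im ≠ 0) (hb : b.im ≠ 0) :
    Integrable fun t : ℝ => ((t : ℂ) - a)⁻¹ * ((t : ℂ) - b)⁻¹ :=
  (memLp_two_inv_ofReal_sub ha).integrable_mul (memLp_two_inv_ofReal_sub hb)

lemma hasDerivAt_log_ofReal_sub {a : ℂ} (ha : a.im ≠ 0) (t : ℝ) :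
    HasDerivAt (fun s : ℝ => log ((s : ℂ) - a)) ((t : ℂ) - a)⁻¹ t := by
  have h := ((hasDerivAt_id (t : ℂ)).comp_ofReal.sub_const a).clog_real
    (mem_slitPlane_iff.2 (Or.inr (by simpa using ha)))
  simpa [one_div] using h

lemma tendsto_log_ofReal_sub_sub_log_atTop (a : ℂ) :
    Tendsto (fun t : ℝ => log ((t : ℂ) - a) - Real.log t) atTop (𝓝 0) := by
  have hinv : Tendsto (fun t : ℝ => (t : ℂ)⁻¹) atTop (𝓝 0) := by
    simpa [Function.comp_def] using (continuous_ofReal.tendsto 0).comp tendsto_inv_atTop_zero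
  have hlim : Tendsto (fun t : ℝ => 1 - a * (t : ℂ)⁻¹) atTop (𝓝 1) := by
    simpa using tendsto_const_nhds.sub (hinv.const_mul a)
  have hlog := (continuousAt_clog one_mem_slitPlane).tendsto.comp hlim
  rw [log_one] at hlog
  refine hlog.congr' ?_
  filter_upwards [eventually_gt_atTop ‖a‖] with t ht
  have ht0 : 0 < t := (norm_nonneg a).trans_lt ht
  have hfac : (t : ℂ) - a = t * (1 - a * (t : ℂ)⁻¹) := by
    field_simp [ofReal_ne_zero.2 ht0.ne']
  have hta : (t : ℂ) - a ≠ 0 := by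
    rw [sub_ne_zero]
    rintro rfl
    simp [abs_of_pos ht0] at ht
  rw [Function.comp_apply, eq_sub_iff_add_eq, add_comm, hfac,
    log_ofReal_mul ht0 (right_ne_zero_of_mul (hfac ▸ hta))]

/- For `t → -∞`, `t - a = (-t) (-1 + a / t)` and `-1 + a / t` tends to `-1` from the half-plane of
`-Im a`, where `log` has the one-sided limits `± π i`. -/
lemma tendsto_log_ofReal_sub_sub_log_neg_atBot {a : ℂ} (ha : a.im ≠ 0) :
    Tendsto (fun t : ℝ => log ((t : ℂ) - a) - Real.log (-t)) atBot
      (𝓝 (-(SignType.sign a.im : ℂ) * π * I)) := by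
  set w : ℝ → ℂ := fun t => -1 + a * (t : ℂ)⁻¹
  have hw : Tendsto w atBot (𝓝 (-1)) := by
    have hinv : Tendsto (fun t : ℝ => (t : ℂ)⁻¹) atBot (𝓝 0) := by
      simpa [Function.comp_def] using (continuous_ofReal.tendsto 0).comp tendsto_inv_atBot_zero
    simpa using tendsto_const_nhds.add (hinv.const_mul a)
  have hw_im (t : ℝ) : (w t).im = a.im / t := by simp [w, ← div_eq_mul_inv, div_ofReal_im]
  have hlog : Tendsto (fun t => log (w t)) atBot (𝓝 (-(SignType.sign a.im : ℂ) * π * I)) := by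
    rcases ha.lt_or_gt with h | h
    · have hw' : Tendsto w atBot (𝓝[{z | 0 ≤ z.im}] (-1)) := by
        refine tendsto_nhdsWithin_iff.2 ⟨hw, ?_⟩
        filter_upwards [eventually_lt_atBot 0] with t ht
        simpa [hw_im] using (div_pos_of_neg_of_neg h ht).le
      have hval : -(SignType.sign a.im : ℂ) * π * I = Real.log ‖(-1 : ℂ)‖ + π * I := by
        simp [sign_neg h]
      rw [hval]
      exact (tendsto_log_nhdsWithin_im_nonneg_of_re_neg_of_im_zero (by simp) (by simp)).comp hw'
    · have hw' : Tendsto w atBot (𝓝[{z | z.im < 0}] (-1)) := by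
        refine tendsto_nhdsWithin_iff.2 ⟨hw, ?_⟩
        filter_upwards [eventually_lt_atBot 0] with t ht
        simpa [hw_im] using div_neg_of_pos_of_neg h ht
      have hval : -(SignType.sign a.im : ℂ) * π * I = Real.log ‖(-1 : ℂ)‖ - π * I := by
        simp [sign_pos h]
      rw [hval]
      exact (tendsto_log_nhdsWithin_im_neg_of_re_neg_of_im_zero (by simp) (by simp)).comp hw'
  refine hlog.congr' ?_
  filter_upwards [eventually_lt_atBot 0] with t ht
  have hw0 : w t ≠ 0 := fun h0 => by simpa [hw_im, ha, ht.ne] using congrArg im h0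
  have hfac : (t : ℂ) - a = ((-t : ℝ) : ℂ) * w t := by
    simp only [w, ofReal_neg]
    field_simp [ofReal_ne_zero.2 ht.ne]
    ring
  rw [eq_sub_iff_add_eq, add_comm, hfac, log_ofReal_mul (neg_pos.2 ht) hw0]

lemma integral_inv_ofReal_sub_mul_self {a : ℂ} (ha : a.im ≠ 0) :
    ∫ t : ℝ, ((t : ℂ) - a)⁻¹ * ((t : ℂ) - a)⁻¹ = 0 := by
  have hderiv (t : ℝ) :
      HasDerivAt (fun s : ℝ => -((s : ℂ) - a)⁻¹) (((t : ℂ) - a)⁻¹ * ((t : ℂ) - a)⁻¹) t := by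
    refine ((((hasDerivAt_id (t : ℂ)).comp_ofReal.sub_const a).inv
      (ofReal_sub_ne_zero ha t)).neg).congr_deriv ?_
    simp only [id]
    field_simp
  have hlim {l : Filter ℝ} (hl : Tendsto (fun t : ℝ => (t : ℂ)) l (Bornology.cobounded ℂ)) :
      Tendsto (fun t : ℝ => -((t : ℂ) - a)⁻¹) l (𝓝 0) := by
    simpa using (tendsto_inv₀_cobounded.comp ((tendsto_sub_const_cobounded a).comp hl)).neg
  rw [integral_of_hasDerivAt_of_tendsto hderiv
    (integrable_inv_ofReal_sub_mul_inv_ofReal_sub ha ha)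
    (hlim (RCLike.tendsto_ofReal_atBot_cobounded ℂ))
    (hlim (RCLike.tendsto_ofReal_atTop_cobounded ℂ)), sub_zero]

/- For `a = b` both sides vanish, the right-hand side through `x / 0 = 0`. -/
theorem integral_inv_ofReal_sub_mul_inv_ofReal_sub {a b : ℂ} (ha : a.im ≠ 0) (hb : b.im ≠ 0) :
    ∫ t : ℝ, ((t : ℂ) - a)⁻¹ * ((t : ℂ) - b)⁻¹ =
      π * I * (SignType.sign a.im - SignType.sign b.im) / (a - b) := by
  rcases eq_or_ne a b with rfl | hab
  · simp [integral_inv_ofReal_sub_mul_self ha]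
  set F : ℝ → ℂ := fun t => (a - b)⁻¹ * (log ((t : ℂ) - a) - log ((t : ℂ) - b))
  have hderiv (t : ℝ) : HasDerivAt F (((t : ℂ) - a)⁻¹ * ((t : ℂ) - b)⁻¹) t := by
    refine (((hasDerivAt_log_ofReal_sub ha t).sub (hasDerivAt_log_ofReal_sub hb t)).const_mul
      (a - b)⁻¹).congr_deriv ?_
    field_simp [ofReal_sub_ne_zero ha t, ofReal_sub_ne_zero hb t]
    ring
  have htop : Tendsto F atTop (𝓝 0) := by
    simpa [F] using ((tendsto_log_ofReal_sub_sub_log_atTop a).sub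
      (tendsto_log_ofReal_sub_sub_log_atTop b)).const_mul (a - b)⁻¹
  have hbot : Tendsto F atBot
      (𝓝 ((a - b)⁻¹ * (-(SignType.sign a.im : ℂ) * π * I - -(SignType.sign b.im : ℂ) * π * I))) := by
    simpa [F] using ((tendsto_log_ofReal_sub_sub_log_neg_atBot ha).sub
      (tendsto_log_ofReal_sub_sub_log_neg_atBot hb)).const_mul (a - b)⁻¹
  rw [integral_of_hasDerivAt_of_tendsto hderiv (integrable_inv_ofReal_sub_mul_inv_ofReal_sub ha hb)
    hbot htop]
  field_simp
  ring

theorem integral_sum_mul_inv_ofReal_sub_mul_inv_ofReal_sub {ι : Type*} [Fintype ι]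
    (c a b : ι → ℂ) (ha : ∀ i, (a i).im ≠ 0) (hb : ∀ i, (b i).im ≠ 0) :
    ∫ t : ℝ, ∑ i, c i * (((t : ℂ) - a i)⁻¹ * ((t : ℂ) - b i)⁻¹) =
      ∑ i, c i * (π * I * (SignType.sign (a i).im - SignType.sign (b i).im) / (a i - b i)) := by
  rw [integral_finsetSum _ fun i _ =>
    (integrable_inv_ofReal_sub_mul_inv_ofReal_sub (ha i) (hb i)).const_mul (c i)]
  simp only [integral_const_mul, integral_inv_ofReal_sub_mul_inv_ofReal_sub (ha _) (hb _)]

lemma integral_muDiag {E : Type*} [NormedAddCommGroup E] [NormedSpace ℝ E]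
    (f : (Fin 2 → ℝ) → E) : ∫ t, f t ∂muDiag = π • ∫ t : ℝ, f fun _ => t := by
  have hemb : MeasurableEmbedding fun t : ℝ => (fun _ : Fin 2 => t) :=
    (continuous_pi fun _ => continuous_id).measurableEmbedding fun x y h => congrFun h 0
  rw [muDiag, integral_smul_measure, hemb.integral_map, ENNReal.toReal_ofReal Real.pi_pos.le]

lemma kernelK_two_diag (z₁ z₂ : ℂ) (t : ℝ) :
    kernelK 2 ![z₁, z₂] (fun _ => t) =
      ∑ i : Fin 6, ![-I / 2, I / 2, I / 2, -I / 4, I / 4, -I / 2] i *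
        (((t : ℂ) - ![z₁, z₁, z₂, -I, I, I] i)⁻¹ * ((t : ℂ) - ![z₂, -I, -I, -I, I, -I] i)⁻¹) := by
  have h4 : (2 * I) ^ 2 = -4 := by rw [mul_pow, I_sq]; norm_num
  simp only [kernelK, h4, Fin.prod_univ_two, Fin.sum_univ_succ, Matrix.cons_val_zero,
    Matrix.cons_val_one, Matrix.cons_val_succ, Matrix.cons_val_fin_one, prod_const, card_univ,
    Fintype.card_fin, univ_unique, Fin.default_eq_zero, sum_const, card_singleton, one_smul]
  ring

theorem inv_pi_sq_mul_integral_kernelK_two_muDiag {z₁ z₂ : ℂ} (hz₁ : z₁.im ≠ 0)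
    (hz₂ : z₂.im ≠ 0) :
    (1 / (π : ℂ) ^ 2) * ∫ t, kernelK 2 ![z₁, z₂] t ∂muDiag =
      -I / 2 + ((SignType.sign z₁.im - SignType.sign z₂.im) / (z₁ - z₂)
        - (SignType.sign z₁.im + 1) / (z₁ + I) - (SignType.sign z₂.im + 1) / (z₂ + I)) / 2 := by
  simp_rw [integral_muDiag, kernelK_two_diag]
  rw [integral_sum_mul_inv_ofReal_sub_mul_inv_ofReal_sub]
  · simp only [Fin.sum_univ_succ, Matrix.cons_val_zero, Matrix.cons_val_succ, neg_im, I_im,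
      Left.neg_neg_iff, zero_lt_one, sign_neg, sign_pos, SignType.coe_neg, SignType.coe_one,
      sub_neg_eq_add, sub_self, mul_zero, div_zero, univ_unique, Fin.default_eq_zero,
      Matrix.cons_val_fin_one, sum_const, card_singleton, one_smul, real_smul]
    field_simp
    rw [I_sq]
    ring
  all_goals intro i; fin_cases i <;> simp [hz₁, hz₂]

lemma VarNonDep.apply_eq_of_im_neg_of_im_pos {f : (Fin 2 → ℂ) → ℂ} (hf : VarNonDep 2 f)
    {z₁ z₂ w₂ : ℂ} (h₁ : z₁.im < 0) (h₂ : 0 < z₂.im) (hw₂ : 0 < w₂.im) :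
    f ![z₁, z₂] = f ![z₁, w₂] := by
  refine hf _ ?_ _ ?_ ⟨0, h₁⟩ ?_ ?_
  all_goals intro j; fin_cases j
  all_goals simp [h₁.ne, h₂.ne', hw₂.ne', h₁, hw₂.le, not_lt.2 h₂.le]

/-- Example 3.5, the function `f₂` on the lower components: on `ℂ⁻ × ℂ⁺` the Cauchy-type
function of `μ₂` equals `−i/2 + 1/(z₂−z₁) − 1/(i+z₂)`, on `ℂ⁻ × ℂ⁻` it equals `−i/2`; in
particular it does not satisfy the variable non-dependence property. -/
theorem diag_measure_cauchy_type_lower :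
    (∀ z₁ z₂ : ℂ, z₁.im < 0 → 0 < z₂.im →
      (1 / (Real.pi : ℂ) ^ 2) * ∫ t, kernelK 2 ![z₁, z₂] t ∂muDiag =
        -Complex.I / 2 + (z₂ - z₁)⁻¹ - (Complex.I + z₂)⁻¹) ∧
    (∀ z₁ z₂ : ℂ, z₁.im < 0 → z₂.im < 0 →
      (1 / (Real.pi : ℂ) ^ 2) * ∫ t, kernelK 2 ![z₁, z₂] t ∂muDiag =
        -Complex.I / 2) ∧
    ¬ VarNonDep 2 (fun z => (1 / (Real.pi : ℂ) ^ 2) * ∫ t, kernelK 2 z t ∂muDiag) := by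
  have hpos (z₁ z₂ : ℂ) (h₁ : z₁.im < 0) (h₂ : 0 < z₂.im) :
      (1 / (π : ℂ) ^ 2) * ∫ t, kernelK 2 ![z₁, z₂] t ∂muDiag =
        -I / 2 + (z₂ - z₁)⁻¹ - (I + z₂)⁻¹ := by
    rw [inv_pi_sq_mul_integral_kernelK_two_muDiag h₁.ne h₂.ne', sign_neg h₁, sign_pos h₂,
      ← neg_sub z₂ z₁]
    simp only [SignType.coe_one, SignType.coe_neg_one, div_neg]
    ring
  refine ⟨hpos, fun z₁ z₂ h₁ h₂ => ?_, fun hf => ?_⟩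
  · rw [inv_pi_sq_mul_integral_kernelK_two_muDiag h₁.ne h₂.ne, sign_neg h₁, sign_neg h₂]
    simp
  · -- `z₁ = -i` would not do: there the value is `-i / 2` for every `z₂ ∈ ℂ⁺`.
    have h := hf.apply_eq_of_im_neg_of_im_pos (z₁ := -2 * I) (z₂ := I) (w₂ := 2 * I)
      (by simp) (by simp) (by simp)
    rw [hpos _ _ (by simp) (by simp), hpos _ _ (by simp) (by simp)] at h
    have him := congrArg im h
    ring_nf at him
    norm_num at him
end
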